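/- arXiv:1802.03663 — 2 statements merged into one kernel-verified Lean document; each statement's English description precedes it below -/
import Mathlib

section
/- Let $0<a<1$, $b,c>0$, and $\mu\ge 0$. Then any root $\lambda\in\mathbb{C}$ of the quadratic equation $\lambda^2 - (\mu+a+b)\lambda + (c + b(\mu+a)) = 0$ satisfies $\mathrm{Re}\,\lambda \ge \min\{b, (a+b)/2, (c+ab)/(a+b)\}$. -/
theorem stmt_0 (a b c μ : ℝ) (ha : 0 < a) (ha1 : a < 1) (hb : 0 < b) (hc : 0 < c)
    (hμ : 0 ≤ μ) (lam : ℂ)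
    (hroot : lam ^ 2 - (↑(μ + a + b)) * lam + (↑(c + b * (μ + a))) = 0) :
    min b (min ((a + b) / 2) ((c + a * b) / (a + b))) ≤ lam.re := by
  rw [Complex.ext_iff] at hroot
  simp [pow_two, Complex.mul_re, Complex.mul_im, Complex.add_re, Complex.add_im,
    Complex.sub_re, Complex.sub_im, Complex.ofReal_re, Complex.ofReal_im] at hroot
  obtain ⟨hre, him⟩ := hroot
  set x := lam.re with hx
  set y := lam.im with hy
  have hab : 0 < a + b := by linarith
  rcases eq_or_ne y 0 with hy0 | hy0
  · -- real root case: show x ≥ min b ((c+ab)/(a+b))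
    rw [hy0] at hre
    have hre' : x * x - (μ + a + b) * x + (c + b * (μ + a)) = 0 := by linarith [hre]
    have key : min b ((c + a * b) / (a + b)) ≤ x := by
      by_contra h
      push_neg at h
      have hxb' : x < b := lt_of_lt_of_le h (min_le_left _ _)
      have hxq : x < (c + a * b) / (a + b) := lt_of_lt_of_le h (min_le_right _ _)
      have hq' : x * (a + b) < c + a * b := by
        rw [lt_div_iff₀ hab] at hxq; linarith
      have hxma : μ + a < x := by nlinarith
      nlinarith [mul_pos (sub_pos.2 hxb') (sub_pos.2 hxma), sq_nonneg x,
        mul_nonneg hμ (sub_pos.2 hxb').le]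
    calc min b (min ((a + b) / 2) ((c + a * b) / (a + b)))
        ≤ min b ((c + a * b) / (a + b)) :=
          le_min (min_le_left _ _) ((min_le_right _ _).trans (min_le_right _ _))
      _ ≤ x := key
  · -- complex case: x = (μ+a+b)/2
    have hx2 : x = (μ + a + b) / 2 := by
      have h0 : y * (2 * x - (μ + a + b)) = 0 := by nlinarith [him]
      rcases mul_eq_zero.1 h0 with h | h
      · exact absurd h hy0
      · linarith
    have hge : (a + b) / 2 ≤ x := by rw [hx2]; linarith
    calc min b (min ((a + b) / 2) ((c + a * b) / (a + b)))
        ≤ (a + b) / 2 := (min_le_right _ _).trans (min_le_left _ _)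
      _ ≤ x := hge
end

section
/- Let $0<a<1$, $b,c>0$, $\mu\ge 0$, and suppose the quadratic $\lambda^2 - (\mu+a+b)\lambda + (c+b(\mu+a)) = 0$ has two real roots $\lambda_1 \ge \lambda_2$. Then $\lambda_2 \ge \min\{b, (c+ab)/(a+b)\} > 0$. -/
theorem stmt_2 (a b c μ : ℝ) (ha : 0 < a) (ha1 : a < 1) (hb : 0 < b) (hc : 0 < c)
    (hμ : 0 ≤ μ) (lam₁ lam₂ : ℝ) (hle : lam₂ ≤ lam₁)
    (h1 : lam₁ ^ 2 - (μ + a + b) * lam₁ + (c + b * (μ + a)) = 0)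
    (h2 : lam₂ ^ 2 - (μ + a + b) * lam₂ + (c + b * (μ + a)) = 0) :
    min b ((c + a * b) / (a + b)) ≤ lam₂ ∧ 0 < min b ((c + a * b) / (a + b)) := by
  have hab : 0 < a + b := by linarith
  have hq : 0 < (c + a * b) / (a + b) := by positivity
  refine ⟨?_, lt_min hb hq⟩
  rcases le_or_gt b lam₂ with h | h
  · exact (min_le_left _ _).trans h
  · -- lam₂ < b; let r be the other root
    set r := μ + a + b - lam₂ with hr_def
    have hr : 0 < r := by simp only [hr_def]; linarith
    have hprod : lam₂ * r = c + b * (μ + a) := by simp only [hr_def]; nlinarith [h2]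
    have hfb : (b - lam₂) * (b - r) = c := by simp only [hr_def]; ring_nf; nlinarith [h2]
    have hrb : r < b := by nlinarith
    have hlam : 0 < lam₂ := by nlinarith
    refine (min_le_right _ _).trans ?_
    rw [div_le_iff₀ hab]
    nlinarith [mul_le_mul_of_nonneg_left hrb.le hlam.le]
end
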